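/- arXiv:1012.0114 — 4 statements merged into one kernel-verified Lean document; each statement's English description precedes it below -/
import Mathlib

section
/- Under a flow of convex closed curves with support function satisfying u_t = u_θθ + u − H(t), the time derivative of the isoperimetric deficit satisfies d/dt (L²(t) − 4π A(t)) = 2L²(t) − 4π ∫₀^{2π} (u_θθ + u)² dθ, independent of the nonlocal term H(t). -/
open Real MeasureTheory intervalIntegral Set Filter

noncomputable def D1 (g : ℝ × ℝ → ℝ) : ℝ × ℝ → ℝ := fun p => fderiv ℝ g p (1, 0)
noncomputable def D2 (g : ℝ × ℝ → ℝ) : ℝ × ℝ → ℝ := fun p => fderiv ℝ g p (0, 1)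

lemma contDiff_D1 {g : ℝ × ℝ → ℝ} (hg : ContDiff ℝ (⊤ : ℕ∞) g) : ContDiff ℝ (⊤ : ℕ∞) (D1 g) :=
  (ContinuousLinearMap.apply ℝ ℝ ((1:ℝ),(0:ℝ))).contDiff.comp (hg.fderiv_right (by simp))

lemma contDiff_D2 {g : ℝ × ℝ → ℝ} (hg : ContDiff ℝ (⊤ : ℕ∞) g) : ContDiff ℝ (⊤ : ℕ∞) (D2 g) :=
  (ContinuousLinearMap.apply ℝ ℝ ((0:ℝ),(1:ℝ))).contDiff.comp (hg.fderiv_right (by simp))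

lemma hasDerivAt_slice1 {g : ℝ × ℝ → ℝ} (hg : Differentiable ℝ g) (θ t : ℝ) :
    HasDerivAt (fun x => g (x, t)) (D1 g (θ, t)) θ := by
  have h1 : HasDerivAt (fun x : ℝ => (x, t)) ((1:ℝ), (0:ℝ)) θ := by
    simpa using HasDerivAt.prodMk (hasDerivAt_id θ) (hasDerivAt_const θ t)
  exact (hg (θ, t)).hasFDerivAt.comp_hasDerivAt θ h1

lemma hasDerivAt_slice2 {g : ℝ × ℝ → ℝ} (hg : Differentiable ℝ g) (θ t : ℝ) :
    HasDerivAt (fun s => g (θ, s)) (D2 g (θ, t)) t := by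
  have h1 : HasDerivAt (fun s : ℝ => (θ, s)) ((0:ℝ), (1:ℝ)) t := by
    simpa using HasDerivAt.prodMk (hasDerivAt_const t θ) (hasDerivAt_id t)
  exact (hg (θ, t)).hasFDerivAt.comp_hasDerivAt t h1

lemma fderiv_swap' {g : ℝ × ℝ → ℝ} (hg : ContDiff ℝ (⊤ : ℕ∞) g) (p : ℝ × ℝ) :
    D2 (D1 g) p = D1 (D2 g) p := by
  have hdg : Differentiable ℝ g := hg.differentiable (by simp)
  have hdg' : Differentiable ℝ (fderiv ℝ g) :=
    (hg.fderiv_right (m := 1) (by exact WithTop.coe_le_coe.mpr le_top)).differentiable (by simp)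
  have hf'' : HasFDerivAt (fderiv ℝ g) (fderiv ℝ (fderiv ℝ g) p) p := (hdg' p).hasFDerivAt
  have hsymm := second_derivative_symmetric (fun y => (hdg y).hasFDerivAt) hf''
  have key : ∀ a b : ℝ × ℝ,
      fderiv ℝ (fun q => fderiv ℝ g q b) p a = fderiv ℝ (fderiv ℝ g) p a b := by
    intro a b
    have h : HasFDerivAt (fun q => fderiv ℝ g q b)
        ((ContinuousLinearMap.apply ℝ ℝ b).comp (fderiv ℝ (fderiv ℝ g) p)) p :=
      (ContinuousLinearMap.apply ℝ ℝ b).hasFDerivAt.comp p hf''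
    rw [h.fderiv]; rfl
  show fderiv ℝ (fun q => fderiv ℝ g q ((1:ℝ),(0:ℝ))) p ((0:ℝ),(1:ℝ))
      = fderiv ℝ (fun q => fderiv ℝ g q ((0:ℝ),(1:ℝ))) p ((1:ℝ),(0:ℝ))
  rw [key, key, hsymm]

lemma hasDerivAt_param (G G' : ℝ → ℝ → ℝ)
    (hG : Continuous fun p : ℝ × ℝ => G p.1 p.2)
    (hG' : Continuous fun p : ℝ × ℝ => G' p.1 p.2)
    (hd : ∀ s θ, HasDerivAt (fun s' => G s' θ) (G' s θ) s) (t : ℝ) :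
    HasDerivAt (fun s => ∫ θ in (0:ℝ)..(2*π), G s θ)
      (∫ θ in (0:ℝ)..(2*π), G' t θ) t := by
  obtain ⟨C, hC⟩ :=
    ((isCompact_closedBall t 1).prod
      (isCompact_uIcc (a := (0:ℝ)) (b := 2*π))).exists_bound_of_continuousOn
      hG'.continuousOn
  refine (intervalIntegral.hasDerivAt_integral_of_dominated_loc_of_deriv_le
    (F := G) (F' := G') (bound := fun _ => C) (Metric.ball_mem_nhds t one_pos) ?_ ?_ ?_ ?_ ?_ ?_).2
  · refine Eventually.of_forall fun s => ?_
    exact ((hG.comp (continuous_const.prodMk continuous_id)).aestronglyMeasurable)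
  · exact ((hG.comp (continuous_const.prodMk continuous_id)).intervalIntegrable _ _)
  · exact ((hG'.comp (continuous_const.prodMk continuous_id)).aestronglyMeasurable)
  · refine Eventually.of_forall fun θ hθ x hx => ?_
    exact hC (x, θ) ⟨Metric.ball_subset_closedBall hx, uIoc_subset_uIcc hθ⟩
  · exact intervalIntegrable_const
  · exact Eventually.of_forall fun θ _ x _ => hd x θ

lemma periodic_deriv' {g : ℝ → ℝ} {c : ℝ} (hg : Function.Periodic g c) :
    Function.Periodic (deriv g) c := by
  intro x
  have h1 : (fun y => g (y + c)) = g := funext fun y => hg y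
  have := deriv_comp_add_const g c x
  rw [h1] at this
  exact this.symm

lemma integral_deriv_periodic (g g' : ℝ → ℝ) (hd : ∀ x, HasDerivAt g (g' x) x)
    (hg' : Continuous g') (hp : g (2*π) = g 0) :
    ∫ x in (0:ℝ)..(2*π), g' x = 0 := by
  rw [intervalIntegral.integral_eq_sub_of_hasDerivAt (fun x _ => hd x)
    (hg'.intervalIntegrable _ _), hp, sub_self]

lemma ibp (U U' U'' V V' V'' : ℝ → ℝ)
    (hU : ∀ x, HasDerivAt U (U' x) x) (hU' : ∀ x, HasDerivAt U' (U'' x) x)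
    (hV : ∀ x, HasDerivAt V (V' x) x) (hV' : ∀ x, HasDerivAt V' (V'' x) x)
    (cU'' : Continuous U'') (cV'' : Continuous V'')
    (pU : U (2*π) = U 0) (pU' : U' (2*π) = U' 0)
    (pV : V (2*π) = V 0) (pV' : V' (2*π) = V' 0) :
    ∫ x in (0:ℝ)..(2*π), U x * V'' x = ∫ x in (0:ℝ)..(2*π), U'' x * V x := by
  have cU : Continuous U := Differentiable.continuous fun x => (hU x).differentiableAt
  have cU' : Continuous U' := Differentiable.continuous fun x => (hU' x).differentiableAt
  have cV : Continuous V := Differentiable.continuous fun x => (hV x).differentiableAt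
  have cV' : Continuous V' := Differentiable.continuous fun x => (hV' x).differentiableAt
  have h1 : ∀ x, HasDerivAt (fun y => U y * V' y - U' y * V y)
      (U x * V'' x - U'' x * V x) x := by
    intro x
    have h := ((hU x).mul (hV' x)).sub ((hU' x).mul (hV x))
    exact h.congr_deriv (by ring)
  have h2 : ∫ x in (0:ℝ)..(2*π), (U x * V'' x - U'' x * V x) = 0 := by
    rw [intervalIntegral.integral_eq_sub_of_hasDerivAt (fun x _ => h1 x)
      (((cU.mul cV'').sub (cU''.mul cV)).intervalIntegrable _ _)]
    rw [pU, pU', pV, pV']; ring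
  have hi1 : IntervalIntegrable (fun x => U x * V'' x) volume 0 (2*π) :=
    (cU.mul cV'').intervalIntegrable _ _
  have hi2 : IntervalIntegrable (fun x => U'' x * V x) volume 0 (2*π) :=
    (cU''.mul cV).intervalIntegrable _ _
  have h3 := intervalIntegral.integral_sub hi1 hi2
  rw [h2] at h3
  linarith


/-- Under a flow with support function satisfying `u_t = u_θθ + u − H(t)`, the
isoperimetric deficit `L² − 4πA` satisfies
`d/dt (L² − 4πA) = 2L² − 4π ∫₀^{2π} (u_θθ + u)² dθ`, with no `H` term. -/
theorem stmt_8 (T : ℝ) (hT : 0 < T) (u : ℝ → ℝ → ℝ) (H : ℝ → ℝ)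
    (hu : ContDiff ℝ (⊤ : ℕ∞) (Function.uncurry u))
    (hH : Continuous H)
    (hper : ∀ θ t, u (θ + 2 * π) t = u θ t)
    (heq : ∀ θ : ℝ, ∀ t ∈ Set.Ico (0:ℝ) T,
      deriv (fun s => u θ s) t = deriv (deriv (fun x => u x t)) θ + u θ t - H t)
    (L A : ℝ → ℝ)
    (hL : ∀ t, L t = ∫ θ in (0:ℝ)..(2 * π), u θ t)
    (hA : ∀ t, A t = (1 / 2) * ∫ θ in (0:ℝ)..(2 * π),
      u θ t * (deriv (deriv (fun x => u x t)) θ + u θ t)) :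
    ∀ t ∈ Set.Ico (0:ℝ) T,
      HasDerivAt (fun s => (L s) ^ 2 - 4 * π * A s)
        (2 * (L t) ^ 2 - 4 * π * ∫ θ in (0:ℝ)..(2 * π),
          (deriv (deriv (fun x => u x t)) θ + u θ t) ^ 2) t := by
  intro t ht
  set f : ℝ × ℝ → ℝ := Function.uncurry u with hfdef
  have hud : Differentiable ℝ f := hu.differentiable (by simp)
  have hu1 : ContDiff ℝ (⊤ : ℕ∞) (D1 f) := contDiff_D1 hu
  have hw : ContDiff ℝ (⊤ : ℕ∞) (D1 (D1 f)) := contDiff_D1 hu1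
  have hv : ContDiff ℝ (⊤ : ℕ∞) (D2 f) := contDiff_D2 hu
  have hv1 : ContDiff ℝ (⊤ : ℕ∞) (D1 (D2 f)) := contDiff_D1 hv
  have hv2 : ContDiff ℝ (⊤ : ℕ∞) (D1 (D1 (D2 f))) := contDiff_D1 hv1
  have hw2 : ContDiff ℝ (⊤ : ℕ∞) (D2 (D1 (D1 f))) := contDiff_D2 hw
  -- slice derivatives
  have hs1 : ∀ s θ, HasDerivAt (fun x => u x s) (D1 f (θ, s)) θ :=
    fun s θ => hasDerivAt_slice1 hud θ s
  have hs1w : ∀ s θ, HasDerivAt (fun x => D1 f (x, s)) (D1 (D1 f) (θ, s)) θ :=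
    fun s θ => hasDerivAt_slice1 (hu1.differentiable (by simp)) θ s
  have hs1v : ∀ s θ, HasDerivAt (fun x => D2 f (x, s)) (D1 (D2 f) (θ, s)) θ :=
    fun s θ => hasDerivAt_slice1 (hv.differentiable (by simp)) θ s
  have hs1v1 : ∀ s θ, HasDerivAt (fun x => D1 (D2 f) (x, s)) (D1 (D1 (D2 f)) (θ, s)) θ :=
    fun s θ => hasDerivAt_slice1 (hv1.differentiable (by simp)) θ s
  have hs2 : ∀ θ s, HasDerivAt (fun s' => u θ s') (D2 f (θ, s)) s :=
    fun θ s => hasDerivAt_slice2 hud θ s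
  have hs2w : ∀ θ s, HasDerivAt (fun s' => D1 (D1 f) (θ, s')) (D2 (D1 (D1 f)) (θ, s)) s :=
    fun θ s => hasDerivAt_slice2 (hw.differentiable (by simp)) θ s
  have hderiv1 : ∀ s, deriv (fun x => u x s) = fun θ => D1 f (θ, s) :=
    fun s => funext fun θ => (hs1 s θ).deriv
  have hdd : ∀ s θ, deriv (deriv (fun x => u x s)) θ = D1 (D1 f) (θ, s) := by
    intro s θ; rw [hderiv1 s]; exact (hs1w s θ).deriv
  -- the evolution equation in terms of D's, at time t
  have hveq : ∀ θ, D2 f (θ, t) = D1 (D1 f) (θ, t) + u θ t - H t := by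
    intro θ
    have h := heq θ t ht
    rw [hdd t θ] at h
    rw [← (hs2 θ t).deriv]
    exact h
  -- periodicity
  have Pu : ∀ s, Function.Periodic (fun x => u x s) (2*π) := fun s x => hper x s
  have Pu1 : ∀ s, Function.Periodic (fun x => D1 f (x, s)) (2*π) := by
    intro s
    have h : (fun x => D1 f (x, s)) = deriv (fun x => u x s) := (hderiv1 s).symm
    rw [h]; exact periodic_deriv' (Pu s)
  have Pw : ∀ s, Function.Periodic (fun x => D1 (D1 f) (x, s)) (2*π) := by
    intro s
    have h : (fun x => D1 (D1 f) (x, s)) = deriv (fun x => D1 f (x, s)) :=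
      funext fun θ => ((hs1w s θ).deriv).symm
    rw [h]; exact periodic_deriv' (Pu1 s)
  have Pv : ∀ s, Function.Periodic (fun x => D2 f (x, s)) (2*π) := by
    intro s x
    have h1 : (fun s' => u (x + 2*π) s') = fun s' => u x s' := funext fun s' => hper x s'
    calc D2 f (x + 2*π, s) = deriv (fun s' => u (x + 2*π) s') s := ((hs2 (x + 2*π) s).deriv).symm
      _ = deriv (fun s' => u x s') s := by rw [h1]
      _ = D2 f (x, s) := (hs2 x s).deriv
  have Pv1 : ∀ s, Function.Periodic (fun x => D1 (D2 f) (x, s)) (2*π) := by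
    intro s
    have h : (fun x => D1 (D2 f) (x, s)) = deriv (fun x => D2 f (x, s)) :=
      funext fun θ => ((hs1v s θ).deriv).symm
    rw [h]; exact periodic_deriv' (Pv s)
  -- continuity of slices
  have cu : Continuous fun θ => u θ t := hu.continuous.comp (continuous_id.prodMk continuous_const)
  have cw : Continuous fun θ => D1 (D1 f) (θ, t) :=
    hw.continuous.comp (continuous_id.prodMk continuous_const)
  have cv : Continuous fun θ => D2 f (θ, t) :=
    hv.continuous.comp (continuous_id.prodMk continuous_const)
  have cv2 : Continuous fun θ => D1 (D1 (D2 f)) (θ, t) :=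
    hv2.continuous.comp (continuous_id.prodMk continuous_const)
  -- ∫ w = 0
  have ZW : ∫ θ in (0:ℝ)..(2*π), D1 (D1 f) (θ, t) = 0 :=
    integral_deriv_periodic _ _ (hs1w t) cw (by simpa using Pu1 t 0)
  -- derivative of L-integral
  have hLd : HasDerivAt (fun s => ∫ θ in (0:ℝ)..(2*π), u θ s)
      (∫ θ in (0:ℝ)..(2*π), D2 f (θ, t)) t := by
    refine hasDerivAt_param (fun s θ => u θ s) (fun s θ => D2 f (θ, s)) ?_ ?_
      (fun s θ => hs2 θ s) t
    · exact hu.continuous.comp (continuous_snd.prodMk continuous_fst)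
    · exact hv.continuous.comp (continuous_snd.prodMk continuous_fst)
  have hLval : ∫ θ in (0:ℝ)..(2*π), D2 f (θ, t)
      = (∫ θ in (0:ℝ)..(2*π), u θ t) - 2*π * H t := by
    have e1 : EqOn (fun θ => D2 f (θ, t))
        (fun θ => (D1 (D1 f) (θ, t) + u θ t) - H t) (uIcc (0:ℝ) (2*π)) :=
      fun θ _ => hveq θ
    rw [intervalIntegral.integral_congr e1,
      intervalIntegral.integral_sub ((cw.fun_add cu).intervalIntegrable _ _)
        (intervalIntegrable_const),
      intervalIntegral.integral_add (cw.intervalIntegrable _ _) (cu.intervalIntegrable _ _),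
      ZW, intervalIntegral.integral_const]
    simp [smul_eq_mul]
  -- derivative of A-integral
  have hGA : HasDerivAt (fun s => ∫ θ in (0:ℝ)..(2*π), u θ s * (D1 (D1 f) (θ, s) + u θ s))
      (∫ θ in (0:ℝ)..(2*π),
        (D2 f (θ, t) * (D1 (D1 f) (θ, t) + u θ t)
          + u θ t * (D2 (D1 (D1 f)) (θ, t) + D2 f (θ, t)))) t := by
    refine hasDerivAt_param _ _ ?_ ?_ (fun s θ => (hs2 θ s).fun_mul ((hs2w θ s).fun_add (hs2 θ s))) t
    · exact (hu.continuous.comp (continuous_snd.prodMk continuous_fst)).mul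
        (((hw.continuous.comp (continuous_snd.prodMk continuous_fst))).add
          (hu.continuous.comp (continuous_snd.prodMk continuous_fst)))
    · exact ((hv.continuous.comp (continuous_snd.prodMk continuous_fst)).mul
        (((hw.continuous.comp (continuous_snd.prodMk continuous_fst))).add
          (hu.continuous.comp (continuous_snd.prodMk continuous_fst)))).add
        ((hu.continuous.comp (continuous_snd.prodMk continuous_fst)).mul
          (((hw2.continuous.comp (continuous_snd.prodMk continuous_fst))).add
            (hv.continuous.comp (continuous_snd.prodMk continuous_fst))))
  -- Clairaut
  have hsw : D2 (D1 (D1 f)) = D1 (D1 (D2 f)) := by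
    have h1 : D2 (D1 f) = D1 (D2 f) := funext (fderiv_swap' hu)
    funext p
    calc D2 (D1 (D1 f)) p = D1 (D2 (D1 f)) p := fderiv_swap' hu1 p
      _ = D1 (D1 (D2 f)) p := by rw [h1]
  -- integration by parts
  have hIBP : ∫ θ in (0:ℝ)..(2*π), u θ t * D1 (D1 (D2 f)) (θ, t)
      = ∫ θ in (0:ℝ)..(2*π), D1 (D1 f) (θ, t) * D2 f (θ, t) := by
    refine ibp (fun θ => u θ t) (fun θ => D1 f (θ, t)) (fun θ => D1 (D1 f) (θ, t))
      (fun θ => D2 f (θ, t)) (fun θ => D1 (D2 f) (θ, t)) (fun θ => D1 (D1 (D2 f)) (θ, t))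
      (hs1 t) (hs1w t) (hs1v t) (hs1v1 t) cw cv2 ?_ ?_ ?_ ?_
    · simpa using Pu t 0
    · simpa using Pu1 t 0
    · simpa using Pv t 0
    · simpa using Pv1 t 0
  -- value of the square integral
  set K := ∫ θ in (0:ℝ)..(2*π), (D1 (D1 f) (θ, t) + u θ t)^2 with hK
  set Lt := ∫ θ in (0:ℝ)..(2*π), u θ t with hLt
  have claim1 : ∫ θ in (0:ℝ)..(2*π), D2 f (θ, t) * (D1 (D1 f) (θ, t) + u θ t)
      = K - H t * Lt := by
    have e1 : EqOn (fun θ => D2 f (θ, t) * (D1 (D1 f) (θ, t) + u θ t))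
        (fun θ => (D1 (D1 f) (θ, t) + u θ t)^2 - (H t * D1 (D1 f) (θ, t) + H t * u θ t))
        (uIcc (0:ℝ) (2*π)) := by
      intro θ _
      simp only
      rw [hveq θ]; ring
    rw [intervalIntegral.integral_congr e1,
      intervalIntegral.integral_sub (((cw.fun_add cu).fun_pow 2).intervalIntegrable _ _)
        (((continuous_const.fun_mul cw).fun_add (continuous_const.fun_mul cu)).intervalIntegrable _ _),
      intervalIntegral.integral_add ((continuous_const.fun_mul cw).intervalIntegrable _ _)
        ((continuous_const.fun_mul cu).intervalIntegrable _ _),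
      intervalIntegral.integral_const_mul, intervalIntegral.integral_const_mul, ZW]
    rw [← hK, ← hLt]; ring
  -- value of the A-derivative
  have claim2 : ∫ θ in (0:ℝ)..(2*π),
      (D2 f (θ, t) * (D1 (D1 f) (θ, t) + u θ t)
        + u θ t * (D2 (D1 (D1 f)) (θ, t) + D2 f (θ, t)))
      = 2 * (K - H t * Lt) := by
    have cwt2 : Continuous fun θ => D2 (D1 (D1 f)) (θ, t) :=
      hw2.continuous.comp (continuous_id.prodMk continuous_const)
    rw [intervalIntegral.integral_add
      ((cv.fun_mul (cw.fun_add cu)).intervalIntegrable _ _)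
      ((cu.fun_mul (cwt2.fun_add cv)).intervalIntegrable _ _)]
    have e2 : EqOn (fun θ => u θ t * (D2 (D1 (D1 f)) (θ, t) + D2 f (θ, t)))
        (fun θ => u θ t * D1 (D1 (D2 f)) (θ, t) + u θ t * D2 f (θ, t))
        (uIcc (0:ℝ) (2*π)) := by
      intro θ _
      simp only [hsw]; ring
    rw [intervalIntegral.integral_congr e2,
      intervalIntegral.integral_add ((cu.fun_mul cv2).intervalIntegrable _ _)
        ((cu.fun_mul cv).intervalIntegrable _ _), hIBP, claim1]
    have e3 : EqOn (fun θ => D1 (D1 f) (θ, t) * D2 f (θ, t) + u θ t * D2 f (θ, t))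
        (fun θ => D2 f (θ, t) * (D1 (D1 f) (θ, t) + u θ t)) (uIcc (0:ℝ) (2*π)) := by
      intro θ _; simp only; ring
    rw [← intervalIntegral.integral_add ((cw.fun_mul cv).intervalIntegrable _ _)
        ((cu.fun_mul cv).intervalIntegrable _ _),
      intervalIntegral.integral_congr e3, claim1]
    ring
  -- rewrite A in D-form
  have hA2 : (fun s => (1/2 : ℝ) * ∫ θ in (0:ℝ)..(2*π),
        u θ s * (deriv (deriv (fun x => u x s)) θ + u θ s))
      = fun s => (1/2 : ℝ) * ∫ θ in (0:ℝ)..(2*π), u θ s * (D1 (D1 f) (θ, s) + u θ s) := by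
    funext s
    congr 1
    refine intervalIntegral.integral_congr fun θ _ => ?_
    rw [hdd s θ]
  have hAd : HasDerivAt (fun s => (1/2 : ℝ) * ∫ θ in (0:ℝ)..(2*π),
        u θ s * (deriv (deriv (fun x => u x s)) θ + u θ s)) (K - H t * Lt) t := by
    rw [hA2]
    have := HasDerivAt.const_mul (1/2 : ℝ) hGA
    rw [claim2] at this
    exact this.congr_deriv (by ring)
  have hLfun : L = fun s => ∫ θ in (0:ℝ)..(2*π), u θ s := funext hL
  have hAfun : A = fun s => (1/2 : ℝ) * ∫ θ in (0:ℝ)..(2*π),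
      u θ s * (deriv (deriv (fun x => u x s)) θ + u θ s) := funext hA
  have hLd' : HasDerivAt L (Lt - 2*π * H t) t := by
    rw [hLfun]; rw [hLval] at hLd; exact hLd
  have hAd' : HasDerivAt A (K - H t * Lt) t := by rw [hAfun]; exact hAd
  have hfin := (hLd'.pow 2).sub (HasDerivAt.const_mul (4*π) hAd')
  have hLtval : L t = Lt := hL t
  have hKval : (∫ θ in (0:ℝ)..(2 * π),
      (deriv (deriv (fun x => u x t)) θ + u θ t) ^ 2) = K := by
    refine intervalIntegral.integral_congr fun θ _ => ?_
    rw [hdd t θ]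
  rw [hLtval, hKval]
  refine hfin.congr_deriv ?_
  rw [hLtval]
  ring
end

section
/- (Green–Osher inequality for convex curves) For a convex closed plane curve γ with length L, enclosed area A, and positive curvature k, one has ∫_γ (1/k) ds ≥ (L² − 2πA)/π. -/
open Real MeasureTheory intervalIntegral Set Filter

noncomputable section GO

namespace GO
open Complex AddCircle ContinuousMap
open scoped ContDiff

lemma tpp : (0:ℝ) < 2 * π := Real.two_pi_pos

/-- Fourier coefficient of (the complexification of) a real function on `[0, 2π]`. -/
def cf (g : ℝ → ℝ) (n : ℤ) : ℂ := fourierCoeffOn tpp (fun x => (g x : ℂ)) n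

lemma periodic_deriv' {g : ℝ → ℝ} {c : ℝ} (hp : Function.Periodic g c) :
    Function.Periodic (deriv g) c := by
  intro x
  have h : g = fun y => g (y + c) := funext fun y => (hp y).symm
  conv_rhs => rw [h]
  rw [deriv_comp_add_const]

lemma fourierCoeffOn_congr_b {a b b' : ℝ} (h : b = b') (hab : a < b) (hab' : a < b')
    (f : ℝ → ℂ) (n : ℤ) : fourierCoeffOn hab f n = fourierCoeffOn hab' f n := by
  subst h; rfl

lemma parseval (g : ℝ → ℝ) (hg : Continuous g) (hp : Function.Periodic g (2 * π)) :
    Summable (fun n : ℤ => ‖cf g n‖ ^ 2) ∧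
      (∫ θ in (0:ℝ)..(2 * π), g θ ^ 2) = 2 * π * ∑' n : ℤ, ‖cf g n‖ ^ 2 := by
  haveI : Fact (0 < 2 * π) := ⟨tpp⟩
  set gC : ℝ → ℂ := fun x => (g x : ℂ) with hgC
  have hper0 : gC 0 = gC (0 + 2 * π) := by
    simp only [hgC, zero_add]
    norm_cast
    simpa using (hp 0).symm
  have hcont : Continuous gC := Complex.continuous_ofReal.comp hg
  have hGcont : Continuous (liftIco (2 * π) 0 gC) :=
    liftIco_continuous hper0 hcont.continuousOn
  set G : C(AddCircle (2 * π), ℂ) := ⟨liftIco (2 * π) 0 gC, hGcont⟩ with hG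
  have hcoeff : ∀ n : ℤ, fourierCoeff (⇑G) n = cf g n := by
    intro n
    have h1 : fourierCoeff (liftIco (2 * π) 0 gC) n
        = fourierCoeffOn (lt_add_of_pos_right 0 (Fact.out : (0:ℝ) < 2*π)) gC n :=
      fourierCoeff_liftIco_eq gC n
    rw [show (⇑G) = liftIco (2 * π) 0 gC from rfl, h1]
    exact fourierCoeffOn_congr_b (by ring) _ _ _ _
  set F := ContinuousMap.toLp (E := ℂ) 2 haarAddCircle ℂ G with hF
  have hcoeffF : ∀ n : ℤ, fourierCoeff (F : AddCircle (2*π) → ℂ) n = cf g n := by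
    intro n; rw [fourierCoeff_toLp, hcoeff]
  constructor
  · -- summability
    have hmem := lp.memℓp (fourierBasis.repr F)
    have hsum := ((memℓp_gen_iff (by norm_num : (0:ℝ) < (2 : ENNReal).toReal)).mp hmem)
    have : Summable fun n : ℤ => ‖fourierBasis.repr F n‖ ^ (2:ℕ) := by
      apply hsum.congr
      intro n
      rw [← Real.rpow_natCast]
      norm_num
    apply this.congr
    intro n
    rw [fourierBasis_repr, hcoeffF]
  · -- value
    have hps := tsum_sq_fourierCoeff F
    have h2 : (∑' n : ℤ, ‖cf g n‖ ^ 2) = ∫ t, ‖F t‖ ^ 2 ∂haarAddCircle := by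
      rw [← hps]; exact tsum_congr fun n => by rw [hcoeffF]
    have h3 : ∫ t, ‖F t‖ ^ 2 ∂haarAddCircle = ∫ t, ‖G t‖ ^ 2 ∂haarAddCircle := by
      apply MeasureTheory.integral_congr_ae
      filter_upwards [ContinuousMap.coeFn_toLp (p := 2) haarAddCircle (𝕜 := ℂ) G] with t ht
      rw [hF, ht]
    have h4 : (∫ t, ‖G t‖ ^ 2 ∂(volume : Measure (AddCircle (2*π))))
        = (2*π) * ∫ t, ‖G t‖ ^ 2 ∂haarAddCircle := by
      rw [AddCircle.volume_eq_smul_haarAddCircle, MeasureTheory.integral_smul_measure,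
        ENNReal.toReal_ofReal tpp.le, smul_eq_mul]
    have h5 : ∫ x in (0:ℝ)..(0 + 2*π), ‖G (x : AddCircle (2*π))‖ ^ 2
        = ∫ t, ‖G t‖ ^ 2 ∂(volume : Measure (AddCircle (2*π))) :=
      AddCircle.intervalIntegral_preimage (2*π) 0 (fun b => ‖G b‖ ^ 2)
    have h6 : ∫ x in (0:ℝ)..(0 + 2*π), ‖G (x : AddCircle (2*π))‖ ^ 2
        = ∫ θ in (0:ℝ)..(2*π), g θ ^ 2 := by
      rw [zero_add]
      rw [intervalIntegral.integral_of_le tpp.le, intervalIntegral.integral_of_le tpp.le]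
      rw [integral_Ioc_eq_integral_Ioo, integral_Ioc_eq_integral_Ioo]
      refine setIntegral_congr_fun measurableSet_Ioo fun x hx => ?_
      have hx' : x ∈ Ico 0 (0 + 2*π) := by
        rw [zero_add]; exact Ioo_subset_Ico_self hx
      have : G (x : AddCircle (2*π)) = gC x := by
        show liftIco (2*π) 0 gC (x : AddCircle (2*π)) = gC x
        exact liftIco_coe_apply hx'
      rw [this, hgC]
      simp [sq_abs]
    rw [← h6, h5, h4, h2, h3]

lemma cf_add (f g : ℝ → ℝ) (hf : Continuous f) (hg : Continuous g) (n : ℤ) :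
    cf (fun x => f x + g x) n = cf f n + cf g n := by
  haveI : Fact (0 < 2 * π) := ⟨tpp⟩
  simp only [cf, fourierCoeffOn_eq_integral]
  rw [← smul_add, ← intervalIntegral.integral_add]
  · congr 1
    apply intervalIntegral.integral_congr
    intro x _
    push_cast
    rw [smul_eq_mul, smul_eq_mul, smul_eq_mul, mul_add]
  · exact (((map_continuous (fourier (-n))).comp
      (AddCircle.continuous_mk' _)).smul (Complex.continuous_ofReal.comp hf)).intervalIntegrable _ _
  · exact (((map_continuous (fourier (-n))).comp
      (AddCircle.continuous_mk' _)).smul (Complex.continuous_ofReal.comp hg)).intervalIntegrable _ _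

lemma cf_deriv (g : ℝ → ℝ) (hg : ContDiff ℝ ∞ g) (hp : Function.Periodic g (2 * π)) (n : ℤ) :
    cf (deriv g) n = (n * Complex.I) * cf g n := by
  haveI : Fact (0 < 2 * π) := ⟨tpp⟩
  have hdg : Differentiable ℝ g := (contDiff_infty_iff_deriv.mp hg).1
  have hdc : Continuous (deriv g) := (contDiff_infty_iff_deriv.mp hg).2.continuous
  have hgper : g (2 * π) = g 0 := by simpa using hp 0
  rcases eq_or_ne n 0 with rfl | hn
  · simp only [cf, fourierCoeffOn_eq_integral, neg_zero, fourier_zero, one_smul]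
    have : (∫ x in (0:ℝ)..(2*π), ((deriv g x : ℝ) : ℂ))
        = (((∫ x in (0:ℝ)..(2*π), deriv g x : ℝ)) : ℂ) := intervalIntegral.integral_ofReal
    rw [this, intervalIntegral.integral_deriv_eq_sub (fun x _ => hdg x)
      (hdc.intervalIntegrable _ _), hgper]
    simp
  · have hder : ∀ x ∈ Set.uIcc (0:ℝ) (2*π), HasDerivAt (fun y => ((g y : ℝ) : ℂ))
        ((fun y => ((deriv g y : ℝ) : ℂ)) x) x := fun x _ => (hdg x).hasDerivAt.ofReal_comp
    have hint : IntervalIntegrable (fun y => ((deriv g y : ℝ) : ℂ)) volume 0 (2*π) :=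
      (Complex.continuous_ofReal.comp hdc).intervalIntegrable _ _
    have h := fourierCoeffOn_of_hasDerivAt tpp hn hder hint
    rw [show ((g (2*π) : ℂ)) - ((g 0 : ℂ)) = 0 by rw [hgper]; ring] at h
    rw [mul_zero, zero_sub] at h
    have hπ : (π : ℂ) ≠ 0 := Complex.ofReal_ne_zero.mpr Real.pi_ne_zero
    have hnC : (n : ℂ) ≠ 0 := Int.cast_ne_zero.mpr hn
    simp only [cf]
    push_cast at h
    rw [h]
    field_simp [Complex.I_ne_zero]
    ring

lemma cf_zero (g : ℝ → ℝ) :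
    cf g 0 = (((1 / (2*π) : ℝ)) : ℂ) * (((∫ θ in (0:ℝ)..(2*π), g θ : ℝ)) : ℂ) := by
  haveI : Fact (0 < 2 * π) := ⟨tpp⟩
  simp only [cf, fourierCoeffOn_eq_integral, neg_zero, fourier_zero, one_smul, sub_zero]
  rw [intervalIntegral.integral_ofReal, Complex.real_smul]

lemma qkey (m : ℤ) : 0 ≤ ((m:ℝ)^2 - 1)^2 + ((m:ℝ)^2 - 2)^2 - 1 := by
  have h : m = 0 ∨ m = 1 ∨ m = -1 ∨ 2 ≤ m ∨ m ≤ -2 := by omega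
  have h4 : m = 0 ∨ m = 1 ∨ m = -1 ∨ (4:ℝ) ≤ (m:ℝ)^2 := by
    rcases h with h|h|h|h|h
    · exact Or.inl h
    · exact Or.inr (Or.inl h)
    · exact Or.inr (Or.inr (Or.inl h))
    · refine Or.inr (Or.inr (Or.inr ?_))
      have h2 : (2:ℝ) ≤ (m:ℝ) := by exact_mod_cast h
      nlinarith
    · refine Or.inr (Or.inr (Or.inr ?_))
      have h2 : (m:ℝ) ≤ -2 := by exact_mod_cast h
      nlinarith
  rcases h4 with h|h|h|h
  · subst h; norm_num
  · subst h; norm_num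
  · subst h; norm_num
  · nlinarith

end GO
end GO

/-- Green–Osher inequality for convex closed curves, in terms of the support
function `u`: `∫_γ (1/k) ds = ∫₀^{2π} (u''+u)² dθ ≥ (L² − 2πA)/π`. -/
theorem stmt_9 (u : ℝ → ℝ) (hu : ContDiff ℝ (⊤ : ℕ∞) u)
    (hper : Function.Periodic u (2 * π))
    (hconv : ∀ θ, 0 < deriv (deriv u) θ + u θ)
    (L A : ℝ)
    (hL : L = ∫ θ in (0:ℝ)..(2 * π), u θ)
    (hA : A = (1 / 2) * ∫ θ in (0:ℝ)..(2 * π), u θ * (deriv (deriv u) θ + u θ)) :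
    (∫ θ in (0:ℝ)..(2 * π), (deriv (deriv u) θ + u θ) ^ 2) ≥
      (L ^ 2 - 2 * π * A) / π := by
  have hu0 : ContDiff ℝ (((⊤:ℕ∞) : WithTop ℕ∞)) u := hu.of_le (by simp)
  have hu1 : ContDiff ℝ (((⊤:ℕ∞) : WithTop ℕ∞)) (deriv u) :=
    (contDiff_infty_iff_deriv.mp hu0).2
  have hcu : Continuous u := hu0.continuous
  have hcu' : Continuous (deriv u) := hu1.continuous
  have hcu'' : Continuous (deriv (deriv u)) := (contDiff_infty_iff_deriv.mp hu1).2.continuous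
  have hperd : Function.Periodic (deriv u) (2*π) := GO.periodic_deriv' hper
  have hperdd : Function.Periodic (deriv (deriv u)) (2*π) := GO.periodic_deriv' hperd
  have hcF : Continuous (fun θ => deriv (deriv u) θ + u θ) := hcu''.add hcu
  have hperF : Function.Periodic (fun θ => deriv (deriv u) θ + u θ) (2*π) := hperdd.add hper
  have hcS : Continuous (fun θ => u θ + (deriv (deriv u) θ + u θ)) := hcu.add hcF
  have hperS : Function.Periodic (fun θ => u θ + (deriv (deriv u) θ + u θ)) (2*π) :=
    hper.add hperF
  -- coefficient identities
  have hd1 : ∀ n : ℤ, GO.cf (deriv u) n = ((n:ℂ) * Complex.I) * GO.cf u n :=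
    GO.cf_deriv u hu0 hper
  have hd2 : ∀ n : ℤ, GO.cf (deriv (deriv u)) n = ((n:ℂ) * Complex.I) * GO.cf (deriv u) n :=
    GO.cf_deriv (deriv u) hu1 hperd
  have hcfF : ∀ n : ℤ, GO.cf (fun θ => deriv (deriv u) θ + u θ) n
      = ((1 : ℂ) - (n:ℂ)^2) * GO.cf u n := by
    intro n
    rw [GO.cf_add (deriv (deriv u)) u hcu'' hcu n, hd2 n, hd1 n]
    linear_combination ((n:ℂ)^2 * GO.cf u n) * Complex.I_sq
  have hcfS : ∀ n : ℤ, GO.cf (fun θ => u θ + (deriv (deriv u) θ + u θ)) n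
      = ((2 : ℂ) - (n:ℂ)^2) * GO.cf u n := by
    intro n
    rw [GO.cf_add u (fun θ => deriv (deriv u) θ + u θ) hcu hcF n, hcfF n]
    ring
  -- squared-norm translations
  have hfn : ∀ n : ℤ, ‖GO.cf (fun θ => deriv (deriv u) θ + u θ) n‖^2
      = ((n:ℝ)^2 - 1)^2 * ‖GO.cf u n‖^2 := by
    intro n
    rw [hcfF n, norm_mul, mul_pow]
    congr 1
    rw [show ((1:ℂ) - (n:ℂ)^2) = (((1 - (n:ℝ)^2 : ℝ)) : ℂ) by push_cast; ring,
      Complex.norm_real, Real.norm_eq_abs, sq_abs]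
    ring
  have hsn : ∀ n : ℤ, ‖GO.cf (fun θ => u θ + (deriv (deriv u) θ + u θ)) n‖^2
      = ((n:ℝ)^2 - 2)^2 * ‖GO.cf u n‖^2 := by
    intro n
    rw [hcfS n, norm_mul, mul_pow]
    congr 1
    rw [show ((2:ℂ) - (n:ℂ)^2) = (((2 - (n:ℝ)^2 : ℝ)) : ℂ) by push_cast; ring,
      Complex.norm_real, Real.norm_eq_abs, sq_abs]
    ring
  -- Parseval
  obtain ⟨sum_u, val_u⟩ := GO.parseval u hcu hper
  obtain ⟨sum_f, val_f⟩ := GO.parseval (fun θ => deriv (deriv u) θ + u θ) hcF hperF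
  obtain ⟨sum_s, val_s⟩ := GO.parseval (fun θ => u θ + (deriv (deriv u) θ + u θ)) hcS hperS
  have sum_f' : Summable (fun n : ℤ => ((n:ℝ)^2-1)^2 * ‖GO.cf u n‖^2) := sum_f.congr hfn
  have sum_s' : Summable (fun n : ℤ => ((n:ℝ)^2-2)^2 * ‖GO.cf u n‖^2) := sum_s.congr hsn
  set X := ∑' n : ℤ, ((n:ℝ)^2-1)^2 * ‖GO.cf u n‖^2 with hX
  set Y := ∑' n : ℤ, ((n:ℝ)^2-2)^2 * ‖GO.cf u n‖^2 with hY
  set Z := ∑' n : ℤ, ‖GO.cf u n‖^2 with hZ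
  have hIf : (∫ θ in (0:ℝ)..(2*π), (deriv (deriv u) θ + u θ)^2) = 2*π*X := by
    rw [val_f, hX]
    congr 1
    exact tsum_congr hfn
  have hIs : (∫ θ in (0:ℝ)..(2*π), (u θ + (deriv (deriv u) θ + u θ))^2) = 2*π*Y := by
    rw [val_s, hY]
    congr 1
    exact tsum_congr hsn
  have hIu : (∫ θ in (0:ℝ)..(2*π), u θ^2) = 2*π*Z := val_u
  -- the zeroth coefficient and L
  have hc0 : GO.cf u 0 = (((1 / (2*π) : ℝ)) : ℂ) * ((L : ℝ) : ℂ) := by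
    rw [GO.cf_zero u, ← hL]
  have hnorm0 : ‖GO.cf u 0‖^2 = (1/(2*π))^2 * L^2 := by
    rw [hc0, norm_mul, mul_pow, Complex.norm_real, Complex.norm_real,
      Real.norm_eq_abs, Real.norm_eq_abs, _root_.sq_abs, _root_.sq_abs]
  have ha0 : L^2 = (2*π)^2 * ‖GO.cf u 0‖^2 := by
    rw [hnorm0]
    have hπ : π ≠ 0 := Real.pi_ne_zero
    field_simp
  -- key spectral inequality
  have key : 4 * ‖GO.cf u 0‖^2 ≤ X + Y - Z := by
    have hsum : Summable (fun n : ℤ =>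
        (((n:ℝ)^2-1)^2 * ‖GO.cf u n‖^2 + ((n:ℝ)^2-2)^2 * ‖GO.cf u n‖^2) - ‖GO.cf u n‖^2) :=
      (sum_f'.add sum_s').sub sum_u
    have hle := Summable.le_tsum hsum 0 (fun m _ => by
      have h1 := GO.qkey m
      have h2 : (0:ℝ) ≤ ‖GO.cf u m‖^2 := by positivity
      nlinarith [mul_nonneg h1 h2])
    rw [Summable.tsum_sub (sum_f'.add sum_s') sum_u, Summable.tsum_add sum_f' sum_s'] at hle
    rw [← hX, ← hY, ← hZ] at hle
    calc 4 * ‖GO.cf u 0‖^2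
        = (((0:ℤ):ℝ)^2-1)^2 * ‖GO.cf u 0‖^2 + (((0:ℤ):ℝ)^2-2)^2 * ‖GO.cf u 0‖^2
            - ‖GO.cf u 0‖^2 := by norm_num
      _ ≤ X + Y - Z := hle
  -- expand (u + f)^2
  have hexp : (∫ θ in (0:ℝ)..(2*π), (u θ + (deriv (deriv u) θ + u θ))^2)
      = (∫ θ in (0:ℝ)..(2*π), u θ^2)
        + ((2 * ∫ θ in (0:ℝ)..(2*π), u θ * (deriv (deriv u) θ + u θ))
          + (∫ θ in (0:ℝ)..(2*π), (deriv (deriv u) θ + u θ)^2)) := by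
    rw [← intervalIntegral.integral_const_mul, ← intervalIntegral.integral_add
        (show IntervalIntegrable (fun θ => 2 * (u θ * (deriv (deriv u) θ + u θ))) volume 0 (2*π) from
          (continuous_const.mul (hcu.mul hcF)).intervalIntegrable _ _)
        (show IntervalIntegrable (fun θ => (deriv (deriv u) θ + u θ)^2) volume 0 (2*π) from
          (hcF.pow 2).intervalIntegrable _ _),
      ← intervalIntegral.integral_add
        (show IntervalIntegrable (fun θ => u θ^2) volume 0 (2*π) from
          (hcu.pow 2).intervalIntegrable _ _)
        (show IntervalIntegrable (fun θ => 2 * (u θ * (deriv (deriv u) θ + u θ))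
            + (deriv (deriv u) θ + u θ)^2) volume 0 (2*π) from
          ((continuous_const.mul (hcu.mul hcF)).add (hcF.pow 2)).intervalIntegrable _ _)]
    apply intervalIntegral.integral_congr
    intro θ _
    ring
  -- final arithmetic
  rw [ge_iff_le, div_le_iff₀ Real.pi_pos]
  have hUF : (∫ θ in (0:ℝ)..(2*π), u θ * (deriv (deriv u) θ + u θ)) = π*(Y - Z - X) := by
    rw [hIs, hIu, hIf] at hexp
    linarith
  rw [hA, hUF, hIf, ha0]
  have keyπ := mul_le_mul_of_nonneg_left key (sq_nonneg π)
  nlinarith [keyπ, Real.pi_pos]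
end

section
/- (Refined Green–Osher inequality) For a smooth strictly convex closed plane curve γ with length L, enclosed area A, and curvature k, one has ∫_γ (1/k) ds ≥ (2/π)(L² − 4πA) + 2A. Moreover this improves the Green–Osher bound (L² − 2πA)/π by the nonnegative amount (L² − 4πA)/π. -/
open Real MeasureTheory intervalIntegral Set Filter Complex AddCircle

noncomputable section GO
local instance : Fact ((0:ℝ) < 2 * π) := ⟨Real.two_pi_pos⟩


lemma GO.fourierCoeffOn_add {f g : ℝ → ℂ} (hf : Continuous f) (hg : Continuous g) (n : ℤ) :
    fourierCoeffOn Real.two_pi_pos (fun x => f x + g x) n =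
      fourierCoeffOn Real.two_pi_pos f n + fourierCoeffOn Real.two_pi_pos g n := by
  have hfour : Continuous fun x : ℝ => (fourier (-n) (x : AddCircle (2*π - 0)) : ℂ) :=
    (map_continuous (fourier (-n))).comp (AddCircle.continuous_mk' _)
  simp only [fourierCoeffOn_eq_integral, smul_eq_mul, mul_add]
  rw [← smul_add]
  congr 1
  exact intervalIntegral.integral_add ((hfour.mul hf).intervalIntegrable _ _)
    ((hfour.mul hg).intervalIntegrable _ _)

lemma GO.fourierCoeffOn_deriv {f f' : ℝ → ℂ} (hff' : ∀ x, HasDerivAt f (f' x) x)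
    (hf' : Continuous f') (hpe : f (2*π) = f 0) (n : ℤ) :
    fourierCoeffOn Real.two_pi_pos f' n =
      (Complex.I * n) * fourierCoeffOn Real.two_pi_pos f n := by
  rcases eq_or_ne n 0 with rfl | hn
  · simp only [Int.cast_zero, mul_zero, zero_mul]
    rw [fourierCoeffOn_eq_integral]
    rw [intervalIntegral.integral_congr (g := f') (fun x _ => by simp [fourier_zero])]
    rw [intervalIntegral.integral_eq_sub_of_hasDerivAt (fun x _ => hff' x)
      (hf'.intervalIntegrable _ _), hpe]
    simp
  · have h := fourierCoeffOn_of_hasDerivAt Real.two_pi_pos hn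
      (fun x _ => hff' x) (hf'.intervalIntegrable _ _)
    rw [hpe, sub_self, mul_zero, zero_sub] at h
    have hπ : (Real.pi : ℂ) ≠ 0 := Complex.ofReal_ne_zero.mpr Real.pi_ne_zero
    have hnz : (n : ℂ) ≠ 0 := Int.cast_ne_zero.mpr hn
    have h2π : (2*(π:ℂ)) ≠ 0 := by simp [hπ]
    apply mul_left_cancel₀ h2π
    field_simp at h
    push_cast at h
    linear_combination -h

lemma GO.parseval_s10 (f g : C(AddCircle (2*π), ℂ)) :
    HasSum (fun n : ℤ => (starRingEnd ℂ) (fourierCoeff (⇑f) n) * fourierCoeff (⇑g) n)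
      ((1/(2*π) : ℂ) * ∫ x in (0:ℝ)..(2*π), (starRingEnd ℂ) (f x) * g x) := by
  have h := fourierBasis.hasSum_inner_mul_inner
    (ContinuousMap.toLp (E := ℂ) 2 haarAddCircle ℂ f) (ContinuousMap.toLp (E := ℂ) 2 haarAddCircle ℂ g)
  have hrepr : ∀ (F : C(AddCircle (2*π), ℂ)) (n : ℤ),
      (inner (𝕜 := ℂ) ((fourierBasis (T := 2*π)) n) (ContinuousMap.toLp (E := ℂ) 2 haarAddCircle ℂ F))
        = fourierCoeff (⇑F) n := by
    intro F n
    rw [← HilbertBasis.repr_apply_apply, fourierBasis_repr, fourierCoeff_toLp]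
  have hL : ∀ n : ℤ, (inner (𝕜 := ℂ) (ContinuousMap.toLp (E := ℂ) 2 haarAddCircle ℂ f)
      ((fourierBasis (T := 2*π)) n)) = (starRingEnd ℂ) (fourierCoeff (⇑f) n) := by
    intro n
    rw [← inner_conj_symm, hrepr]
  have hinner : (inner (𝕜 := ℂ) (ContinuousMap.toLp (E := ℂ) 2 haarAddCircle ℂ f)
        (ContinuousMap.toLp (E := ℂ) 2 haarAddCircle ℂ g))
      = (1/(2*π) : ℂ) * ∫ x in (0:ℝ)..(2*π), (starRingEnd ℂ) (f x) * g x := by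
    rw [ContinuousMap.inner_toLp]
    have hpre : (∫ x in (0:ℝ)..(0 + 2*π), (starRingEnd ℂ) (f x) * g x)
        = ∫ t : AddCircle (2*π), (starRingEnd ℂ) (f t) * g t :=
      AddCircle.intervalIntegral_preimage (2*π) 0 (fun t => (starRingEnd ℂ) (f t) * g t)
    rw [zero_add] at hpre
    have hv : (∫ t : AddCircle (2*π), (starRingEnd ℂ) (f t) * g t)
        = (2*π) • ∫ t, (starRingEnd ℂ) (f t) * g t ∂haarAddCircle := by
      rw [volume_eq_smul_haarAddCircle, MeasureTheory.integral_smul_measure,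
        ENNReal.toReal_ofReal Real.two_pi_pos.le]
    rw [hpre, hv, real_smul, ← mul_assoc]
    push_cast
    rw [one_div, inv_mul_cancel₀ (by simp [Real.pi_ne_zero]), one_mul]
    congr 1
    funext x
    exact mul_comm _ _
  have hfun : (fun n : ℤ => (starRingEnd ℂ) (fourierCoeff (⇑f) n) * fourierCoeff (⇑g) n)
      = (fun i : ℤ => (inner (𝕜 := ℂ) (ContinuousMap.toLp (E := ℂ) 2 haarAddCircle ℂ f)
          ((fourierBasis (T := 2*π)) i)) * (inner (𝕜 := ℂ) ((fourierBasis (T := 2*π)) i)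
          (ContinuousMap.toLp (E := ℂ) 2 haarAddCircle ℂ g))) := by
    funext n
    rw [hL n, hrepr g n]
  rw [hfun, ← hinner]
  exact h


lemma GO.periodic_deriv {f : ℝ → ℝ} (hf : Differentiable ℝ f)
    (hp : Function.Periodic f (2*π)) : Function.Periodic (deriv f) (2*π) := by
  intro x
  have h2 : HasDerivAt (fun y => f (y + 2*π)) (deriv f (x + 2*π)) x := by
    simpa [Function.comp_def] using ((hf _).hasDerivAt).comp x ((hasDerivAt_id x).add_const (2*π))
  have he : (fun y => f (y + 2*π)) = f := funext hp
  rw [he] at h2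
  exact h2.deriv.symm

lemma GO.liftCont {f : ℝ → ℂ} (hf : Continuous f) (hp : Function.Periodic f (2*π)) :
    Continuous (hp.lift : AddCircle (2*π) → ℂ) :=
  hf.quotient_liftOn' _

lemma GO.fourierCoeff_lift {f : ℝ → ℂ} (hp : Function.Periodic f (2*π)) (n : ℤ) :
    fourierCoeff (hp.lift : AddCircle (2*π) → ℂ) n = fourierCoeffOn Real.two_pi_pos f n := by
  rw [fourierCoeff_eq_intervalIntegral _ n 0, fourierCoeffOn_eq_integral]
  simp only [Function.Periodic.lift_coe, zero_add, sub_zero, fourier_coe_apply]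

lemma GO.int_fact {n : ℤ} (hn : n ≠ 0) : (0:ℝ) ≤ ((n:ℝ)^2 - 1) * ((n:ℝ)^2 - 4) := by
  have hsq : ((n.natAbs : ℝ))^2 = (n:ℝ)^2 := by
    rw [Nat.cast_natAbs, Int.cast_abs, _root_.sq_abs]
  have hk1 : 1 ≤ n.natAbs := Nat.one_le_iff_ne_zero.mpr (Int.natAbs_ne_zero.mpr hn)
  rcases Nat.lt_or_ge n.natAbs 3 with h3 | h3
  · interval_cases h : n.natAbs
    · rw [← hsq]; norm_num
    · rw [← hsq]; norm_num
  · have h3' : (3:ℝ) ≤ (n.natAbs : ℝ) := by exact_mod_cast h3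
    have h9 : (9:ℝ) ≤ (n:ℝ)^2 := by nlinarith [h3', hsq, sq_nonneg ((n.natAbs:ℝ) - 3)]
    nlinarith [h9, mul_nonneg (by linarith : (0:ℝ) ≤ (n:ℝ)^2 - 9) (by linarith : (0:ℝ) ≤ (n:ℝ)^2 - 4)]

lemma GO.int_one_le {n : ℤ} (hn : n ≠ 0) : (1:ℝ) ≤ (n:ℝ)^2 := by
  have hsq : ((n.natAbs : ℝ))^2 = (n:ℝ)^2 := by rw [Nat.cast_natAbs, Int.cast_abs, _root_.sq_abs]
  have hk1 : (1:ℝ) ≤ (n.natAbs : ℝ) := by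
    exact_mod_cast Nat.one_le_iff_ne_zero.mpr (Int.natAbs_ne_zero.mpr hn)
  nlinarith [hk1, hsq, sq_nonneg ((n.natAbs:ℝ) - 1)]



/-- Refined Green–Osher inequality: `∫_γ (1/k) ds ≥ (2/π)(L² − 4πA) + 2A`,
and this bound improves the Green–Osher bound `(L² − 2πA)/π` by the
nonnegative amount `(L² − 4πA)/π`. -/
theorem stmt_10 (u : ℝ → ℝ) (hu : ContDiff ℝ (⊤ : ℕ∞) u)
    (hper : Function.Periodic u (2 * π))
    (hconv : ∀ θ, 0 < deriv (deriv u) θ + u θ)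
    (L A : ℝ)
    (hL : L = ∫ θ in (0:ℝ)..(2 * π), u θ)
    (hA : A = (1 / 2) * ∫ θ in (0:ℝ)..(2 * π), u θ * (deriv (deriv u) θ + u θ)) :
    (∫ θ in (0:ℝ)..(2 * π), (deriv (deriv u) θ + u θ) ^ 2) ≥
        (2 / π) * (L ^ 2 - 4 * π * A) + 2 * A ∧
      (2 / π) * (L ^ 2 - 4 * π * A) + 2 * A
        = (L ^ 2 - 2 * π * A) / π + (L ^ 2 - 4 * π * A) / π ∧
      0 ≤ (L ^ 2 - 4 * π * A) / π := by
  have hπ : (0:ℝ) < π := Real.pi_pos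
  have hπ' : (π:ℝ) ≠ 0 := hπ.ne'
  -- smoothness
  have huinf : ContDiff ℝ ((⊤:ℕ∞) : WithTop ℕ∞) u := hu.of_le (by simp)
  have hdu : Differentiable ℝ u := huinf.differentiable (by simp)
  have hu' : ContDiff ℝ ((⊤:ℕ∞) : WithTop ℕ∞) (deriv u) := (contDiff_infty_iff_deriv.mp huinf).2
  have hdu1 : Differentiable ℝ (deriv u) := hu'.differentiable (by simp)
  have hcun2 : Continuous (deriv (deriv u)) := ((contDiff_infty_iff_deriv.mp hu').2).continuous
  have hcun : Continuous u := hu.continuous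
  have hcun1 : Continuous (deriv u) := hu'.continuous
  -- periodicity
  have hp1 : Function.Periodic (deriv u) (2*π) := GO.periodic_deriv hdu hper
  have hp2 : Function.Periodic (deriv (deriv u)) (2*π) := GO.periodic_deriv hdu1 hp1
  -- complex versions
  set cu : ℝ → ℂ := fun x => ((u x : ℝ) : ℂ) with hcudef
  set cw : ℝ → ℂ := fun x => ((deriv (deriv u) x + u x : ℝ) : ℂ) with hcwdef
  have hcucont : Continuous cu := Complex.continuous_ofReal.comp hcun
  have hcwcont : Continuous cw := Complex.continuous_ofReal.comp (hcun2.add hcun)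
  have hcup : Function.Periodic cu (2*π) := fun x => by simp [hcudef, hper x]
  have hcwp : Function.Periodic cw (2*π) := fun x => by simp [hcwdef, hper x, hp2 x]
  -- coefficients
  set c : ℤ → ℂ := fun n => fourierCoeffOn Real.two_pi_pos cu n with hcdef
  have hder1 : ∀ n : ℤ, fourierCoeffOn Real.two_pi_pos (fun x => ((deriv u x : ℝ) : ℂ)) n
      = Complex.I * n * c n := by
    intro n
    refine GO.fourierCoeffOn_deriv (fun x => ((hdu x).hasDerivAt).ofReal_comp)
      (Complex.continuous_ofReal.comp hcun1) ?_ n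
    have h0 := hper 0
    rw [zero_add] at h0
    simp [hcudef, h0]
  have hder2 : ∀ n : ℤ, fourierCoeffOn Real.two_pi_pos (fun x => ((deriv (deriv u) x : ℝ) : ℂ)) n
      = Complex.I * n * (Complex.I * n * c n) := by
    intro n
    rw [← hder1 n]
    refine GO.fourierCoeffOn_deriv (fun x => ((hdu1 x).hasDerivAt).ofReal_comp)
      (Complex.continuous_ofReal.comp hcun2) ?_ n
    have h0 := hp1 0
    rw [zero_add] at h0
    simp [h0]
  have hcw : ∀ n : ℤ, fourierCoeffOn Real.two_pi_pos cw n = (1 - (n:ℂ)^2) * c n := by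
    intro n
    have he : cw = fun x => (fun y : ℝ => ((deriv (deriv u) y : ℝ) : ℂ)) x + cu x := by
      funext x; simp [hcwdef, hcudef]
    rw [he, GO.fourierCoeffOn_add (f := fun y : ℝ => ((deriv (deriv u) y : ℝ) : ℂ)) (g := cu)
      (Complex.continuous_ofReal.comp hcun2) hcucont, hder2 n]
    linear_combination ((n:ℂ)^2 * c n) * Complex.I_sq
  -- lifts
  set F : C(AddCircle (2*π), ℂ) := ⟨hcup.lift, GO.liftCont hcucont hcup⟩ with hFdef
  set G : C(AddCircle (2*π), ℂ) := ⟨hcwp.lift, GO.liftCont hcwcont hcwp⟩ with hGdef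
  have hFc : ∀ n : ℤ, fourierCoeff (⇑F) n = c n := fun n => GO.fourierCoeff_lift hcup n
  have hGc : ∀ n : ℤ, fourierCoeff (⇑G) n = (1 - (n:ℂ)^2) * c n := fun n =>
    (GO.fourierCoeff_lift hcwp n).trans (hcw n)
  -- Parseval
  have hPS1 := GO.parseval_s10 G G
  have hPS2 := GO.parseval_s10 F G
  simp only [hGc, hFc] at hPS1 hPS2
  -- pointwise values of lifts
  have hGx : ∀ x : ℝ, (G (x : AddCircle (2*π)) : ℂ) = ((deriv (deriv u) x + u x : ℝ) : ℂ) :=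
    fun x => Function.Periodic.lift_coe hcwp x
  have hFx : ∀ x : ℝ, (F (x : AddCircle (2*π)) : ℂ) = ((u x : ℝ) : ℂ) :=
    fun x => Function.Periodic.lift_coe hcup x
  set I1 : ℝ := ∫ θ in (0:ℝ)..(2*π), (deriv (deriv u) θ + u θ)^2 with hI1def
  have hint1 : (∫ x in (0:ℝ)..(2*π), (starRingEnd ℂ) (G (x : AddCircle (2*π))) * G (x : AddCircle (2*π)))
      = ((I1 : ℝ) : ℂ) := by
    rw [hI1def, ← intervalIntegral.integral_ofReal]
    refine intervalIntegral.integral_congr fun x hx => ?_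
    rw [hGx x, Complex.conj_ofReal, ← Complex.ofReal_mul, ← sq]
  have hint2 : (∫ x in (0:ℝ)..(2*π), (starRingEnd ℂ) (F (x : AddCircle (2*π))) * G (x : AddCircle (2*π)))
      = ((2*A : ℝ) : ℂ) := by
    have h2A : (∫ θ in (0:ℝ)..(2*π), u θ * (deriv (deriv u) θ + u θ)) = 2*A := by
      rw [hA]; ring
    rw [← h2A, ← intervalIntegral.integral_ofReal]
    refine intervalIntegral.integral_congr fun x hx => ?_
    rw [hFx x, hGx x, Complex.conj_ofReal, ← Complex.ofReal_mul]
  rw [hint1] at hPS1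
  rw [hint2] at hPS2
  -- real sums
  set r : ℤ → ℝ := fun n => Complex.normSq (c n) with hrdef
  have hrnn : ∀ n, 0 ≤ r n := fun n => Complex.normSq_nonneg _
  have hconj : ∀ n : ℤ, (starRingEnd ℂ) (1 - (n:ℂ)^2) = 1 - (n:ℂ)^2 := by
    intro n; simp
  have h1 : HasSum (fun n : ℤ => (1-(n:ℝ)^2)^2 * r n) (I1/(2*π)) := by
    refine hasSum_ofReal.mp ?_
    convert hPS1 using 1
    · funext n
      rw [map_mul, hconj n, Complex.ofReal_mul, hrdef]
      push_cast
      rw [Complex.normSq_eq_conj_mul_self]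
      ring
    · push_cast
      ring
  have h2 : HasSum (fun n : ℤ => (1-(n:ℝ)^2) * r n) (A/π) := by
    refine hasSum_ofReal.mp ?_
    convert hPS2 using 1
    · funext n
      rw [Complex.ofReal_mul, hrdef]
      push_cast
      rw [Complex.normSq_eq_conj_mul_self]
      ring
    · push_cast
      field_simp
  -- value of c 0
  have hc0 : c 0 = ((L/(2*π) : ℝ) : ℂ) := by
    show fourierCoeffOn Real.two_pi_pos cu 0 = _
    rw [fourierCoeffOn_eq_integral]
    simp only [neg_zero, fourier_zero, one_smul, sub_zero, Int.cast_zero]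
    rw [hcudef, intervalIntegral.integral_ofReal, ← hL, Complex.real_smul]
    push_cast
    ring
  have hr0 : r 0 = (L/(2*π))^2 := by
    rw [hrdef]
    show Complex.normSq (c 0) = _
    rw [hc0, Complex.normSq_ofReal, sq]
  -- summation juggling
  have ht'' : HasSum (fun n : ℤ => if n = 0 then r 0 else 0) (r 0) := hasSum_ite_eq 0 (r 0)
  have hA' : HasSum (fun n : ℤ => ((n:ℝ)^2 - 1) * r n) (-(A/π)) := by
    have h := h2.neg
    have he : (fun n : ℤ => -((1-(n:ℝ)^2) * r n)) = fun n : ℤ => ((n:ℝ)^2 - 1) * r n := by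
      funext n; ring
    rwa [he] at h
  have ht' : HasSum (fun n : ℤ => (if n = 0 then 0 else ((n:ℝ)^2-1) * r n)) (r 0 - A/π) := by
    have h := hA'.add ht''
    have he : (fun n : ℤ => ((n:ℝ)^2 - 1) * r n + (if n = 0 then r 0 else 0))
        = fun n : ℤ => (if n = 0 then 0 else ((n:ℝ)^2-1) * r n) := by
      funext n
      by_cases hn : n = 0
      · subst hn; simp
      · simp [hn]
    rw [he] at h
    convert h using 1
    ring
  have hIso : 0 ≤ r 0 - A/π := by
    refine hasSum_le (fun n => ?_) hasSum_zero ht'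
    by_cases hn : n = 0
    · simp [hn]
    · simp only [hn, if_false]
      exact mul_nonneg (by linarith [GO.int_one_le hn]) (hrnn n)
  have hmain : 0 ≤ I1/(2*π) - A/π - 4*(r 0 - A/π) := by
    have hq := (h1.sub h2).sub (ht'.mul_left 4)
    refine hasSum_le (fun n => ?_) hasSum_zero hq
    by_cases hn : n = 0
    · subst hn; simp
    · simp only [hn, if_false]
      have hfact := GO.int_fact hn
      have := mul_nonneg hfact (hrnn n)
      nlinarith [this]
  rw [hr0] at hIso hmain
  -- conclusion
  have hLA : 0 ≤ L^2 - 4*π*A := by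
    have h4 : (4*π^2) * ((L/(2*π))^2 - A/π) = L^2 - 4*π*A := by
      field_simp; ring
    nlinarith [mul_nonneg (by positivity : (0:ℝ) ≤ 4*π^2) hIso, h4]
  refine ⟨?_, by field_simp; ring, div_nonneg hLA hπ.le⟩
  rw [ge_iff_le, ← sub_nonneg]
  have key : I1 - ((2/π) * (L^2 - 4*π*A) + 2*A)
      = (2*π) * (I1/(2*π) - A/π - 4*((L/(2*π))^2 - A/π)) := by
    field_simp; ring
  calc (0:ℝ) ≤ (2*π) * (I1/(2*π) - A/π - 4*((L/(2*π))^2 - A/π)) :=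
        mul_nonneg (by positivity) hmain
    _ = I1 - ((2/π) * (L^2 - 4*π*A) + 2*A) := key.symm

end GO
end

section
/- Let u₀ be smooth 2π-periodic with u₀'' + u₀ > 0 everywhere, and suppose L : [0,∞) → ℝ satisfies L(t) ≥ L(0)e^t where L(0) = ∫₀^{2π}u₀. Define u(θ,t) = (e^t/(2√(πt)))∫_{-∞}^{∞} e^{-ξ²/(4t)} u₀(θ−ξ) dξ + L(t)/(2π) − (L(0)/(2π))e^t. Then u_θθ(θ,t) + u(θ,t) > 0 for all θ ∈ S¹ and t > 0, so u is the support function of a strictly convex closed curve for each t. -/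
open Real MeasureTheory Set Filter intervalIntegral

private lemma periodic_deriv'_s17 (f : ℝ → ℝ) (c : ℝ) (h : Function.Periodic f c) :
    Function.Periodic (deriv f) c := by
  intro x
  have hf : (fun y => f (y + c)) = f := funext h
  rw [← deriv_comp_add_const, hf]

private lemma bound_of_periodic (f : ℝ → ℝ) (hf : Continuous f)
    (h : Function.Periodic f (2 * π)) : ∃ C : ℝ, 0 ≤ C ∧ ∀ x, |f x| ≤ C := by
  obtain ⟨C, hC⟩ := (isCompact_Icc (a := (0:ℝ)) (b := 2 * π)).exists_bound_of_continuousOn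
    hf.continuousOn
  refine ⟨C, le_trans (abs_nonneg _) (hC 0 ⟨le_refl _, by positivity⟩), fun x => ?_⟩
  obtain ⟨y, hy, hxy⟩ := h.exists_mem_Ico₀ (by positivity) x
  rw [hxy]
  exact hC y ⟨hy.1, hy.2.le⟩

private lemma conv_integrable (g : ℝ → ℝ) (hg : Continuous g) (hgi : Integrable g)
    (hgnn : ∀ x, 0 ≤ g x) (f : ℝ → ℝ) (hf : Continuous f) (C : ℝ)
    (hC : ∀ x, |f x| ≤ C) (θ : ℝ) :
    Integrable (fun ξ => g ξ * f (θ - ξ)) := by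
  refine (hgi.const_mul C).mono ?_ ?_
  · exact (hg.mul (hf.comp (continuous_const.sub continuous_id))).aestronglyMeasurable
  · filter_upwards with ξ
    have h1 : ‖g ξ * f (θ - ξ)‖ = g ξ * |f (θ - ξ)| := by
      rw [norm_mul, Real.norm_eq_abs, Real.norm_eq_abs, abs_of_nonneg (hgnn ξ)]
    have h2 : ‖C * g ξ‖ = C * g ξ := by
      rw [Real.norm_eq_abs, abs_of_nonneg]
      exact mul_nonneg (le_trans (abs_nonneg _) (hC 0)) (hgnn ξ)
    rw [h1, h2, mul_comm C (g ξ)]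
    exact mul_le_mul_of_nonneg_left (hC _) (hgnn ξ)

private lemma conv_hasDerivAt (g f f' : ℝ → ℝ) (hg : Continuous g) (hgi : Integrable g)
    (hgnn : ∀ x, 0 ≤ g x) (hf : Continuous f) (hf' : Continuous f')
    (hd : ∀ x, HasDerivAt f (f' x) x) (Cf Cf' : ℝ)
    (hCf : ∀ x, |f x| ≤ Cf) (hCf' : ∀ x, |f' x| ≤ Cf') (θ : ℝ) :
    HasDerivAt (fun x => ∫ ξ : ℝ, g ξ * f (x - ξ))
      (∫ ξ : ℝ, g ξ * f' (θ - ξ)) θ := by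
  have key := _root_.hasDerivAt_integral_of_dominated_loc_of_deriv_le
    (F := fun x ξ => g ξ * f (x - ξ)) (F' := fun x ξ => g ξ * f' (x - ξ))
    (x₀ := θ) (bound := fun ξ => Cf' * g ξ) (μ := volume) (Metric.ball_mem_nhds θ one_pos)
    ?_ ?_ ?_ ?_ ?_ ?_
  · exact key.2
  · filter_upwards with x
    exact (hg.mul (hf.comp (continuous_const.sub continuous_id))).aestronglyMeasurable
  · exact conv_integrable g hg hgi hgnn f hf Cf hCf θ
  · exact (hg.mul (hf'.comp (continuous_const.sub continuous_id))).aestronglyMeasurable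
  · filter_upwards with ξ
    intro x _
    have h1 : ‖g ξ * f' (x - ξ)‖ = g ξ * |f' (x - ξ)| := by
      rw [norm_mul, Real.norm_eq_abs, Real.norm_eq_abs, abs_of_nonneg (hgnn ξ)]
    rw [h1, mul_comm Cf' (g ξ)]
    exact mul_le_mul_of_nonneg_left (hCf' _) (hgnn ξ)
  · exact hgi.const_mul Cf'
  · filter_upwards with ξ
    intro x _
    have : HasDerivAt (fun y => f (y - ξ)) (f' (x - ξ)) x := by
      simpa [Function.comp_def] using (hd (x - ξ)).comp x ((hasDerivAt_id x).sub_const ξ)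
    simpa using this.const_mul (g ξ)

/-- If `u₀'' + u₀ > 0` and `L(t) ≥ L(0)eᵗ`, then the function
`u(θ,t) = (eᵗ/(2√(πt)))∫ e^{−ξ²/(4t)} u₀(θ−ξ) dξ + L(t)/(2π) − (L(0)/(2π))eᵗ`
satisfies `u_θθ + u > 0` for all `θ` and `t > 0`, i.e. `u(·,t)` is the support
function of a strictly convex closed curve. -/
theorem stmt_17 (u₀ : ℝ → ℝ)
    (hu₀ : ContDiff ℝ (⊤ : ℕ∞) u₀)
    (hper : Function.Periodic u₀ (2 * π))
    (hconv : ∀ θ, 0 < deriv (deriv u₀) θ + u₀ θ)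
    (L : ℝ → ℝ)
    (hL0 : L 0 = ∫ θ in (0:ℝ)..(2 * π), u₀ θ)
    (hLgrow : ∀ t : ℝ, 0 ≤ t → L t ≥ L 0 * Real.exp t)
    (u : ℝ → ℝ → ℝ)
    (hu : ∀ θ t, u θ t =
      (Real.exp t / (2 * Real.sqrt (π * t))) *
          (∫ ξ : ℝ, Real.exp (-ξ ^ 2 / (4 * t)) * u₀ (θ - ξ)) +
        L t / (2 * π) - (L 0 / (2 * π)) * Real.exp t) :
    ∀ θ : ℝ, ∀ t : ℝ, 0 < t →
      0 < deriv (deriv (fun x => u x t)) θ + u θ t := by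
  intro θ t ht
  -- basic facts about u₀ and its derivatives
  have hS : ContDiff ℝ (⊤ : ℕ∞) u₀ := hu₀.of_le (by simp)
  have hdiff : Differentiable ℝ u₀ := hu₀.differentiable (by simp)
  have hu₁ : ContDiff ℝ (⊤ : ℕ∞) (deriv u₀) := (contDiff_infty_iff_deriv.mp hS).2
  have hdiff' : Differentiable ℝ (deriv u₀) := hu₁.differentiable (by simp)
  have hcont : Continuous u₀ := hS.continuous
  have hcont' : Continuous (deriv u₀) := hu₁.continuous
  have hcont'' : Continuous (deriv (deriv u₀)) :=
    ((contDiff_infty_iff_deriv.mp hu₁).2).continuous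
  have hper' : Function.Periodic (deriv u₀) (2 * π) := periodic_deriv'_s17 _ _ hper
  have hper'' : Function.Periodic (deriv (deriv u₀)) (2 * π) := periodic_deriv'_s17 _ _ hper'
  obtain ⟨C0, hC0nn, hC0⟩ := bound_of_periodic u₀ hcont hper
  obtain ⟨C1, hC1nn, hC1⟩ := bound_of_periodic (deriv u₀) hcont' hper'
  obtain ⟨C2, hC2nn, hC2⟩ := bound_of_periodic (deriv (deriv u₀)) hcont'' hper''
  -- the Gaussian kernel
  set g : ℝ → ℝ := fun ξ => Real.exp (-ξ ^ 2 / (4 * t)) with hg_def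
  have hg : Continuous g := by continuity
  have hgnn : ∀ x, 0 ≤ g x := fun x => (Real.exp_pos _).le
  have hgpos : ∀ x, 0 < g x := fun x => Real.exp_pos _
  have hgi : Integrable g := by
    have h := integrable_exp_neg_mul_sq (b := 1 / (4 * t)) (by positivity)
    refine h.congr (Eventually.of_forall fun x => ?_)
    simp only [hg_def]
    ring_nf
  -- the constant c > 0
  set c : ℝ := Real.exp t / (2 * Real.sqrt (π * t)) with hc_def
  have hc : 0 < c := by
    apply div_pos (Real.exp_pos t)
    have : 0 < Real.sqrt (π * t) := Real.sqrt_pos.mpr (by positivity)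
    linarith
  -- the additive constant
  set K : ℝ := L t / (2 * π) - (L 0 / (2 * π)) * Real.exp t with hK_def
  -- derivatives of the convolution
  have hD1 : ∀ x, HasDerivAt (fun y => ∫ ξ : ℝ, g ξ * u₀ (y - ξ))
      (∫ ξ : ℝ, g ξ * deriv u₀ (x - ξ)) x := fun x =>
    conv_hasDerivAt g u₀ (deriv u₀) hg hgi hgnn hcont hcont'
      (fun y => (hdiff y).hasDerivAt) C0 C1 hC0 hC1 x
  have hD2 : HasDerivAt (fun y => ∫ ξ : ℝ, g ξ * deriv u₀ (y - ξ))
      (∫ ξ : ℝ, g ξ * deriv (deriv u₀) (θ - ξ)) θ :=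
    conv_hasDerivAt g (deriv u₀) (deriv (deriv u₀)) hg hgi hgnn hcont' hcont''
      (fun y => (hdiff' y).hasDerivAt) C1 C2 hC1 hC2 θ
  -- rewrite u
  have hueq : (fun x => u x t) = fun x => c * (∫ ξ : ℝ, g ξ * u₀ (x - ξ)) + K := by
    funext x
    rw [hu x t]
    ring
  -- first derivative
  have hd1 : deriv (fun x => u x t) = fun x => c * (∫ ξ : ℝ, g ξ * deriv u₀ (x - ξ)) := by
    funext x
    rw [hueq]
    exact (((hD1 x).const_mul c).add_const K).deriv
  -- second derivative
  have hd2 : deriv (deriv (fun x => u x t)) θ =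
      c * (∫ ξ : ℝ, g ξ * deriv (deriv u₀) (θ - ξ)) := by
    rw [hd1]
    exact (hD2.const_mul c).deriv
  -- positivity of the convolution with u₀'' + u₀
  have hint0 : Integrable (fun ξ => g ξ * u₀ (θ - ξ)) :=
    conv_integrable g hg hgi hgnn u₀ hcont C0 hC0 θ
  have hint2 : Integrable (fun ξ => g ξ * deriv (deriv u₀) (θ - ξ)) :=
    conv_integrable g hg hgi hgnn (deriv (deriv u₀)) hcont'' C2 hC2 θ
  have hsum : Integrable (fun ξ => g ξ * (deriv (deriv u₀) (θ - ξ) + u₀ (θ - ξ))) := by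
    have := hint2.add hint0
    refine this.congr (Eventually.of_forall fun ξ => ?_)
    simp only [Pi.add_apply]
    ring
  have hpos : 0 < ∫ ξ : ℝ, g ξ * (deriv (deriv u₀) (θ - ξ) + u₀ (θ - ξ)) := by
    rw [integral_pos_iff_support_of_nonneg _ hsum]
    · have : (Function.support fun ξ => g ξ * (deriv (deriv u₀) (θ - ξ) + u₀ (θ - ξ))) =
          Set.univ := by
        ext ξ
        simp only [Function.mem_support, Set.mem_univ, iff_true]
        exact ne_of_gt (mul_pos (hgpos ξ) (hconv (θ - ξ)))
      rw [this]
      simp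
    · intro ξ
      exact le_of_lt (mul_pos (hgpos ξ) (hconv (θ - ξ)))
  have hsplit : ∫ ξ : ℝ, g ξ * (deriv (deriv u₀) (θ - ξ) + u₀ (θ - ξ)) =
      (∫ ξ : ℝ, g ξ * deriv (deriv u₀) (θ - ξ)) + ∫ ξ : ℝ, g ξ * u₀ (θ - ξ) := by
    rw [← integral_add hint2 hint0]
    congr 1
    funext ξ
    ring
  -- nonnegativity of K
  have hK : 0 ≤ K := by
    have h2π : (0:ℝ) < 2 * π := by positivity
    have hgr := hLgrow t ht.le
    have hKeq : K = (L t - L 0 * Real.exp t) / (2 * π) := by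
      rw [hK_def]
      field_simp
    rw [hKeq]
    apply div_nonneg (by linarith) h2π.le
  -- conclude
  rw [hd2, hu θ t]
  have : deriv (deriv (fun x => u x t)) θ + u θ t =
      c * ((∫ ξ : ℝ, g ξ * deriv (deriv u₀) (θ - ξ)) + ∫ ξ : ℝ, g ξ * u₀ (θ - ξ)) + K := by
    rw [hd2, hu θ t]
    ring
  rw [hd2, hu θ t] at this
  rw [this, ← hsplit]
  have := mul_pos hc hpos
  linarith
end
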